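/- arXiv:math/0505050 — 8 statements merged into one kernel-verified Lean document; each statement's English description precedes it below -/
import Mathlib

section
/- Let λ > (1−(n+1)L)^{-1}. Then there exists δ > 0 such that for every nonempty subset f ⊆ {0,…,n} and every s ∈ CR_f one has r_λ(s) + B(δ) ⊆ R_{≤f}; that is, for every b ∈ ℝ^{n+1} with b_0+⋯+b_n = 0 and |b_j| < δ for all j, the point r_λ(s) + b lies in E and satisfies (r_λ(s)+b)_i ≤ 0 for every i ∉ f. -/
open Finset

noncomputable section

/-- The affine hyperplane `E = {t ∈ ℝ^{n+1} : ∑ tᵢ = 1}`. -/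
def planeE (n : ℕ) : Set (Fin (n+1) → ℝ) := {t | ∑ i, t i = 1}

/-- The standard n-simplex `Σ = {t ∈ E : tᵢ ≥ 0 ∀ i}`. -/
def simplexS (n : ℕ) : Set (Fin (n+1) → ℝ) := {t | ∑ i, t i = 1 ∧ ∀ i, 0 ≤ t i}

/-- `R_f = {t ∈ E : tᵢ ≥ 0 for i ∈ f, tᵢ ≤ 0 for i ∉ f}`. -/
def regionR (n : ℕ) (f : Finset (Fin (n+1))) : Set (Fin (n+1) → ℝ) :=
  {t | ∑ i, t i = 1 ∧ (∀ i ∈ f, 0 ≤ t i) ∧ ∀ i ∉ f, t i ≤ 0}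

/-- `R_{≤f} = {t ∈ E : tᵢ ≤ 0 for i ∉ f}`. -/
def regionRle (n : ℕ) (f : Finset (Fin (n+1))) : Set (Fin (n+1) → ℝ) :=
  {t | ∑ i, t i = 1 ∧ ∀ i ∉ f, t i ≤ 0}

/-- The face `|f| = {t ∈ Σ : tᵢ = 0 for i ∉ f}`. -/
def faceF (n : ℕ) (f : Finset (Fin (n+1))) : Set (Fin (n+1) → ℝ) :=
  {t | (∑ i, t i = 1 ∧ ∀ i, 0 ≤ t i) ∧ ∀ i ∉ f, t i = 0}

/-- `CR_f = {t ∈ Σ : tᵢ ≥ L for i ∈ f, tᵢ ≤ L for i ∉ f}`. -/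
def regionCR (n : ℕ) (L : ℝ) (f : Finset (Fin (n+1))) : Set (Fin (n+1) → ℝ) :=
  {t | (∑ i, t i = 1 ∧ ∀ i, 0 ≤ t i) ∧ (∀ i ∈ f, L ≤ t i) ∧ ∀ i ∉ f, t i ≤ L}

/-- The barycentre `ξ_f` of the face `|f|`. -/
def bary (n : ℕ) (f : Finset (Fin (n+1))) : Fin (n+1) → ℝ :=
  fun i => if i ∈ f then (f.card : ℝ)⁻¹ else 0

/-- The retraction `q : E → Σ`, `q(t) = [max(t₀,0),…,max(tₙ,0)]`. -/
def retr (n : ℕ) (t : Fin (n+1) → ℝ) : Fin (n+1) → ℝ :=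
  fun i => (∑ j, max (t j) 0)⁻¹ * max (t i) 0

/-- The collapsing map `C_Σ : Σ → Σ`, `C_Σ(t) = [min(t₀,L),…,min(tₙ,L)]`. -/
def collapse (n : ℕ) (L : ℝ) (t : Fin (n+1) → ℝ) : Fin (n+1) → ℝ :=
  fun i => (∑ j, min (t j) L)⁻¹ * min (t i) L

/-- The radial expansion `r_λ : E → E`. -/
def rexp (n : ℕ) (lam : ℝ) (t : Fin (n+1) → ℝ) : Fin (n+1) → ℝ :=
  fun i => lam * t i - (lam - 1) / ((n : ℝ) + 1)

/-! The map `r_λ` fixes the barycentre and scales by `λ` around it, so a coordinate `sᵢ ≤ L` is sent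
to at most `λ L - (λ - 1)/(n + 1)`. This is negative exactly when `λ (1 - (n + 1) L) > 1`, and its
distance to `0` is the admissible size `δ` of the perturbation. -/

lemma sum_rexp (n : ℕ) (lam : ℝ) {s : Fin (n+1) → ℝ} (hs : ∑ i, s i = 1) :
    ∑ i, rexp n lam s i = 1 := by
  have hn : ((n : ℝ) + 1) ≠ 0 := by positivity
  simp only [rexp, Finset.sum_sub_distrib, ← Finset.mul_sum, hs, Finset.sum_const,
    Finset.card_univ, Fintype.card_fin, nsmul_eq_mul, Nat.cast_add, Nat.cast_one]
  field_simp
  ring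

lemma rexp_add_lt_zero {n : ℕ} {L lam b : ℝ} {s : Fin (n+1) → ℝ} {i : Fin (n+1)}
    (hlam : 0 ≤ lam) (hsi : s i ≤ L) (hb : b < (lam - 1) / ((n : ℝ) + 1) - lam * L) :
    rexp n lam s i + b < 0 := by
  have := mul_le_mul_of_nonneg_left hsi hlam
  simp only [rexp]
  linarith

theorem stmt0_general (n : ℕ) (L lam : ℝ) (hL1 : L < 1 / ((n : ℝ) + 1))
    (hlam : (1 - ((n : ℝ) + 1) * L)⁻¹ < lam) :
    ∃ δ > (0 : ℝ), ∀ f : Finset (Fin (n+1)), f.Nonempty →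
      ∀ s ∈ regionCR n L f, ∀ b : Fin (n+1) → ℝ,
        (∑ j, b j = 0) → (∀ j, |b j| < δ) →
          (fun i => rexp n lam s i + b i) ∈ regionRle n f := by
  have hn : (0 : ℝ) < (n : ℝ) + 1 := by positivity
  have hgap : 0 < 1 - ((n : ℝ) + 1) * L := by
    rw [lt_div_iff₀ hn] at hL1
    linarith
  have hexpand : 1 < lam * (1 - ((n : ℝ) + 1) * L) := (inv_lt_iff_one_lt_mul₀ hgap).mp hlam
  have hlam0 : 0 ≤ lam := by nlinarith
  refine ⟨(lam - 1) / ((n : ℝ) + 1) - lam * L, ?_, fun f _ s hs b hb hbδ => ⟨?_, fun i hi => ?_⟩⟩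
  · rw [gt_iff_lt, sub_pos, lt_div_iff₀ hn]
    linarith
  · rw [Finset.sum_add_distrib, hb, sum_rexp n lam hs.1.1, add_zero]
  · exact (rexp_add_lt_zero hlam0 (hs.2.2 i hi) (abs_lt.mp (hbδ i)).2).le

/-- Lemma 5.5 (lem:expand_CRf): if λ > (1-(n+1)L)⁻¹ then there is δ > 0 with
r_λ(s) + B(δ) ⊆ R_{≤f} for all nonempty f and all s ∈ CR_f. -/
theorem stmt0 (n : ℕ) (L lam : ℝ) (hL0 : 0 < L) (hL1 : L < 1 / ((n : ℝ) + 1))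
    (hlam : (1 - ((n : ℝ) + 1) * L)⁻¹ < lam) :
    ∃ δ > (0 : ℝ), ∀ f : Finset (Fin (n+1)), f.Nonempty →
      ∀ s ∈ regionCR n L f, ∀ b : Fin (n+1) → ℝ,
        (∑ j, b j = 0) → (∀ j, |b j| < δ) →
          (fun i => rexp n lam s i + b i) ∈ regionRle n f :=
  stmt0_general n L lam hL1 hlam
end
end

section
/- For every nonempty subset f ⊆ {0,…,n} and every x ∈ CR_f, the collapsed point C_Σ(x) lies in the convex hull of the set of barycentres {ξ_g : f ⊆ g ⊆ {0,…,n}, g nonempty}. (This is the geometric content of the lemma asserting that the projection-valued function P built from the collapsing map is supported on simplices of the barycentric subdivision all of whose labels contain f.) -/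
open Finset

noncomputable section

/-!
Every point `y` of the simplex whose coordinates are maximal on `f` is a layer cake: subtracting
`m • 1_T`, where `T` is the support of `y` and `m` its least positive value, keeps these properties
and shrinks the support, so `y = ∑ c_g • 1_g` with `c_g ≥ 0` and each `g` a superlevel set of `y`,
hence `f ⊆ g`. As `1_g = #g • ξ_g` and `∑ c_g * #g = ∑ yᵢ = 1`, this is a convex combination of
barycentres `ξ_g`. The collapsed point `C_Σ(x)` of `x ∈ CR_f` is such a `y`, since its coordinates
on `f` equal the largest possible value `L / ∑ⱼ min(xⱼ, L)`.
-/

section Decomposition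

variable {ι : Type*} [Fintype ι] [DecidableEq ι]

theorem exists_sub_smul_indicator_of_ne_zero (f : Finset ι) {y : ι → ℝ} (hy : 0 ≤ y)
    (hmax : ∀ i ∈ f, ∀ j, y j ≤ y i) (hy0 : y ≠ 0) :
    ∃ T : Finset ι, T.Nonempty ∧ f ⊆ T ∧ ∃ m : ℝ, 0 < m ∧
      let y' := y - m • (T : Set ι).indicator 1
      0 ≤ y' ∧ (∀ i ∈ f, ∀ j, y' j ≤ y' i) ∧ #{i | y' i ≠ 0} < #{i | y i ≠ 0} := by
  set T : Finset ι := {i | y i ≠ 0}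
  have hT : T.Nonempty := by
    obtain ⟨i, hi⟩ := Function.ne_iff.mp hy0
    exact ⟨i, by simpa [T] using hi⟩
  obtain ⟨j₀, hj₀T, hj₀⟩ := T.exists_min_image y hT
  have hpos : ∀ i ∈ T, 0 < y i := fun i hi =>
    lt_of_le_of_ne (hy i) (by simpa [T, eq_comm] using hi)
  have hfT : f ⊆ T := fun i hi =>
    mem_filter.mpr ⟨mem_univ _, (lt_of_lt_of_le (hpos j₀ hj₀T) (hmax i hi j₀)).ne'⟩
  refine ⟨T, hT, hfT, y j₀, hpos j₀ hj₀T, ?_⟩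
  intro y'
  have hy' : ∀ i, y' i = if i ∈ T then y i - y j₀ else 0 := by
    intro i
    by_cases hi : i ∈ T
    · simp [y', hi]
    · simp [y', hi, show y i = 0 by simpa [T] using hi]
  refine ⟨fun i => ?_, fun i hi j => ?_, ?_⟩
  · rw [hy']
    split_ifs with hi
    · exact sub_nonneg.mpr (hj₀ i hi)
    · exact le_rfl
  · rw [hy' j, hy' i, if_pos (hfT hi)]
    split_ifs
    · linarith [hmax i hi j]
    · exact sub_nonneg.mpr (hj₀ i (hfT hi))
  · have hsupp : ({i | y' i ≠ 0} : Finset ι) ⊆ T.erase j₀ := by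
      intro i hi
      simp only [mem_filter, mem_univ, true_and, hy'] at hi
      split_ifs at hi with hiT
      · exact mem_erase.mpr ⟨fun h => hi (by simp [h]), hiT⟩
      · exact absurd rfl hi
    exact (card_le_card hsupp).trans_lt (card_erase_lt_of_mem hj₀T)

theorem exists_eq_sum_smul_indicator (f : Finset ι) (y : ι → ℝ) (hy : 0 ≤ y)
    (hmax : ∀ i ∈ f, ∀ j, y j ≤ y i) :
    ∃ c : Finset ι → ℝ, 0 ≤ c ∧ (∀ g, c g ≠ 0 → g.Nonempty ∧ f ⊆ g) ∧
      y = ∑ g, c g • (g : Set ι).indicator 1 := by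
  induction hN : #{i | y i ≠ 0} using Nat.strong_induction_on generalizing y with
  | _ N ih =>
  by_cases hy0 : y = 0
  · exact ⟨0, le_rfl, by simp, by simp [hy0]⟩
  obtain ⟨T, hT, hfT, m, hm, hy', hmax', hcard⟩ :=
    exists_sub_smul_indicator_of_ne_zero f hy hmax hy0
  obtain ⟨c, hc0, hcf, hc⟩ := ih _ (hN ▸ hcard) _ hy' hmax' rfl
  refine ⟨c + Pi.single T m, fun g => ?_, fun g hg => ?_, ?_⟩
  · simp only [Pi.add_apply, Pi.single_apply, Pi.zero_apply]
    split_ifs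
    · exact add_nonneg (hc0 g) hm.le
    · simpa using hc0 g
  · by_cases hgT : g = T
    · exact hgT ▸ ⟨hT, hfT⟩
    · exact hcf g (by simpa [Pi.single_apply, hgT] using hg)
  · simp only [Pi.add_apply, add_smul, sum_add_distrib, ← hc, Pi.single_apply, ite_smul, zero_smul,
      sum_ite_eq', mem_univ, if_true, sub_add_cancel]

end Decomposition

theorem card_smul_bary (n : ℕ) (g : Finset (Fin (n+1))) :
    (#g : ℝ) • bary n g = (g : Set (Fin (n+1))).indicator 1 := by
  ext i
  by_cases hi : i ∈ g
  · have : (#g : ℝ) ≠ 0 := by exact_mod_cast (card_pos.mpr ⟨i, hi⟩).ne'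
    simp [bary, hi, this]
  · simp [bary, hi]

theorem mem_convexHull_bary (n : ℕ) (f : Finset (Fin (n+1))) {y : Fin (n+1) → ℝ}
    (hy : y ∈ simplexS n) (hmax : ∀ i ∈ f, ∀ j, y j ≤ y i) :
    y ∈ convexHull ℝ {z | ∃ g : Finset (Fin (n+1)), g.Nonempty ∧ f ⊆ g ∧ z = bary n g} := by
  obtain ⟨hsum, hnonneg⟩ := hy
  obtain ⟨c, hc0, hcf, rfl⟩ := exists_eq_sum_smul_indicator f y hnonneg hmax
  have hwsum : ∑ g, c g * #g = 1 := by
    rw [← hsum]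
    simp only [Finset.sum_apply, Pi.smul_apply, smul_eq_mul]
    rw [sum_comm]
    simp [← mul_sum, sum_indicator_subset]
  simp only [← card_smul_bary, smul_smul]
  -- only the labels with `c g ≠ 0` are known to be nonempty supersets of `f`
  rw [← sum_filter_of_ne (p := fun g => c g ≠ 0)
    fun g _ h => left_ne_zero_of_mul (smul_ne_zero_iff.mp h).1]
  refine (convex_convexHull ℝ _).sum_mem (fun g _ => mul_nonneg (hc0 g) (Nat.cast_nonneg _)) ?_
    fun g hg => ?_
  · rwa [sum_filter_of_ne fun g _ h => left_ne_zero_of_mul h]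
  · obtain ⟨hg, hfg⟩ := hcf g (mem_filter.mp hg).2
    exact subset_convexHull ℝ _ ⟨g, hg, hfg, rfl⟩

theorem sum_min_pos_of_mem_simplexS (n : ℕ) {L : ℝ} (hL : 0 < L) {x : Fin (n+1) → ℝ}
    (hx : x ∈ simplexS n) : 0 < ∑ j, min (x j) L := by
  have h : ∑ j, (0 : Fin (n+1) → ℝ) j < ∑ j, x j := by
    simp only [Pi.zero_apply, sum_const_zero, hx.1, zero_lt_one]
  obtain ⟨j, -, hj⟩ := exists_lt_of_sum_lt h
  exact sum_pos' (fun i _ => le_min (hx.2 i) hL.le) ⟨j, mem_univ j, lt_min hj hL⟩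

theorem collapse_mem_simplexS (n : ℕ) {L : ℝ} (hL : 0 < L) {x : Fin (n+1) → ℝ}
    (hx : x ∈ simplexS n) : collapse n L x ∈ simplexS n := by
  have hS := sum_min_pos_of_mem_simplexS n hL hx
  refine ⟨?_, fun i => mul_nonneg (inv_nonneg.mpr hS.le) (le_min (hx.2 i) hL.le)⟩
  simp only [collapse, ← mul_sum]
  exact inv_mul_cancel₀ hS.ne'

theorem collapse_le_collapse_of_le (n : ℕ) {L : ℝ} (hL : 0 < L) {x : Fin (n+1) → ℝ}
    (hx : x ∈ simplexS n) {i : Fin (n+1)} (hi : L ≤ x i) (j : Fin (n+1)) :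
    collapse n L x j ≤ collapse n L x i := by
  simp only [collapse, min_eq_right hi]
  exact mul_le_mul_of_nonneg_left (min_le_right _ _)
    (inv_nonneg.mpr (sum_min_pos_of_mem_simplexS n hL hx).le)

theorem stmt1_general (n : ℕ) (L : ℝ) (hL0 : 0 < L)
    (f : Finset (Fin (n+1)))
    (x : Fin (n+1) → ℝ) (hx : x ∈ regionCR n L f) :
    collapse n L x ∈ convexHull ℝ
      {y : Fin (n+1) → ℝ | ∃ g : Finset (Fin (n+1)), g.Nonempty ∧ f ⊆ g ∧ y = bary n g} := by
  obtain ⟨hxS, hfL, -⟩ := hx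
  exact mem_convexHull_bary n f (collapse_mem_simplexS n hL0 hxS)
    fun i hi => collapse_le_collapse_of_le n hL0 hxS (hfL i hi)

/-- For x ∈ CR_f, the collapsed point C_Σ(x) lies in the convex hull of the
barycentres ξ_g with f ⊆ g. -/
theorem stmt1 (n : ℕ) (L : ℝ) (hL0 : 0 < L) (hL1 : L < 1 / ((n : ℝ) + 1))
    (f : Finset (Fin (n+1))) (hf : f.Nonempty)
    (x : Fin (n+1) → ℝ) (hx : x ∈ regionCR n L f) :
    collapse n L x ∈ convexHull ℝ
      {y : Fin (n+1) → ℝ | ∃ g : Finset (Fin (n+1)), g.Nonempty ∧ f ⊆ g ∧ y = bary n g} :=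
  stmt1_general n L hL0 f x hx
end
end

section
/- For every nonempty subset f ⊆ {0,…,n}, the interior of R_f relative to the subspace topology of E equals {t ∈ E : t_i > 0 for all i ∈ f and t_i < 0 for all i ∉ f}. -/
open Finset

noncomputable section

/-- The affine hyperplane E as a subspace of ℝ^{n+1}. -/
abbrev Epts (n : ℕ) : Type := {t : Fin (n+1) → ℝ // ∑ i, t i = 1}

/-- The region R_f viewed as a subset of E. -/
def regionRsub (n : ℕ) (f : Finset (Fin (n+1))) : Set (Epts n) :=
  {t | (∀ i ∈ f, 0 ≤ t.1 i) ∧ ∀ i ∉ f, t.1 i ≤ 0}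

/-- Perturbation of a point of E: add c at j, subtract c at k. -/
lemma epts_perturb (n : ℕ) (t : Epts n) (j k : Fin (n+1)) (hjk : j ≠ k) (c : ℝ) :
    ∑ i, (fun i => t.1 i + (if i = j then c else 0) + (if i = k then -c else 0)) i = 1 := by
  simp only [Finset.sum_add_distrib, t.2, Finset.sum_ite_eq', Finset.mem_univ, if_true]
  ring

lemma epts_perturb_dist (n : ℕ) (t : Epts n) (j k : Fin (n+1)) (hjk : j ≠ k) (c : ℝ)
    (ε : ℝ) (hc : |c| < ε) :
    dist (⟨_, epts_perturb n t j k hjk c⟩ : Epts n) t < ε := by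
  have hε : 0 < ε := lt_of_le_of_lt (abs_nonneg c) hc
  rw [Subtype.dist_eq, dist_pi_lt_iff hε]
  intro i
  simp only [Real.dist_eq]
  by_cases h1 : i = j <;> by_cases h2 : i = k <;>
    simp_all [abs_neg, hε]

/-- The interior of R_f relative to E consists of the points with strict
inequalities. -/
theorem stmt5 (n : ℕ) (f : Finset (Fin (n+1))) (hf : f.Nonempty) :
    interior (regionRsub n f) =
      {t : Epts n | (∀ i ∈ f, 0 < t.1 i) ∧ ∀ i ∉ f, t.1 i < 0} := by
  apply Set.Subset.antisymm
  · intro t ht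
    rw [mem_interior_iff_mem_nhds, Metric.mem_nhds_iff] at ht
    obtain ⟨ε, hε, hball⟩ := ht
    constructor
    · intro j hj
      by_contra hcon
      push_neg at hcon
      obtain ⟨k, hk⟩ : ∃ k : Fin (n+1), j ≠ k := by
        by_contra hc
        push_neg at hc
        have h2 := t.2
        rw [Finset.sum_eq_single j (fun b _ hb => absurd (hc b).symm hb)
          (fun h => absurd (Finset.mem_univ j) h)] at h2
        linarith
      have hd := epts_perturb_dist n t j k hk (-(ε/2)) ε (by rw [abs_neg, abs_of_pos (by linarith)]; linarith)
      have hmem := hball (Metric.mem_ball.mpr hd)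
      have := hmem.1 j hj
      simp [if_neg hk] at this
      linarith
    · intro j hj
      by_contra hcon
      push_neg at hcon
      obtain ⟨k, hkf⟩ := hf
      have hk : j ≠ k := fun h => hj (h ▸ hkf)
      have hd := epts_perturb_dist n t j k hk (ε/2) ε (by rw [abs_of_pos (by linarith)]; linarith)
      have hmem := hball (Metric.mem_ball.mpr hd)
      have := hmem.2 j hj
      simp [if_neg hk] at this
      linarith
  · apply interior_maximal
    · intro t ht
      exact ⟨fun i hi => (ht.1 i hi).le, fun i hi => (ht.2 i hi).le⟩
    · have heq : {t : Epts n | (∀ i ∈ f, 0 < t.1 i) ∧ ∀ i ∉ f, t.1 i < 0}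
          = (⋂ i ∈ f, {t : Epts n | 0 < t.1 i}) ∩ ⋂ i ∈ fᶜ, {t : Epts n | t.1 i < 0} := by
        ext t
        simp [Set.mem_iInter, Finset.mem_compl]
      rw [heq]
      apply IsOpen.inter
      · exact isOpen_biInter_finset fun i _ =>
          isOpen_lt continuous_const ((continuous_apply i).comp continuous_subtype_val)
      · exact isOpen_biInter_finset fun i _ =>
          isOpen_lt ((continuous_apply i).comp continuous_subtype_val) continuous_const
end
end

section
/- For distinct nonempty subsets f ≠ f′ of {0,…,n}, the interiors of R_f and R_{f′} relative to the subspace topology of E are disjoint. -/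
open Finset

noncomputable section

lemma aux6 (n : ℕ) (f f' : Finset (Fin (n+1))) (i : Fin (n+1))
    (hi : i ∈ f) (hi' : i ∉ f') (hf' : f'.Nonempty) (t : Epts n)
    (ht : t ∈ interior (regionRsub n f)) (ht' : t ∈ interior (regionRsub n f')) :
    False := by
  obtain ⟨j, hj⟩ := hf'
  have hij : j ≠ i := fun h => hi' (h ▸ hj)
  have hmem : t ∈ regionRsub n f := interior_subset ht
  have hmem' : t ∈ regionRsub n f' := interior_subset ht'
  have hti0 : t.1 i = 0 := le_antisymm (hmem'.2 i hi') (hmem.1 i hi)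
  -- curve in E
  set c : ℝ → Fin (n+1) → ℝ :=
    fun ε => t.1 + ε • ((Pi.single i 1 : Fin (n+1) → ℝ) - Pi.single j 1) with hc
  have hsum : ∀ ε : ℝ, ∑ k, c ε k = 1 := by
    intro ε
    simp [hc, Finset.sum_add_distrib, t.2, ← Finset.mul_sum, Finset.sum_sub_distrib,
      Pi.single_apply, Finset.sum_ite_eq']
  set φ : ℝ → Epts n := fun ε => ⟨c ε, hsum ε⟩ with hφ
  have hcont : Continuous φ := by
    apply Continuous.subtype_mk
    exact continuous_const.add (continuous_id.smul continuous_const)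
  have hφ0 : φ 0 = t := by
    apply Subtype.ext
    simp [φ, hc]
  have hU : φ ⁻¹' interior (regionRsub n f') ∈ nhds (0:ℝ) := by
    apply hcont.continuousAt.preimage_mem_nhds
    rw [hφ0]
    exact isOpen_interior.mem_nhds ht'
  obtain ⟨δ, hδpos, hδ⟩ := Metric.mem_nhds_iff.1 hU
  have hball : (δ/2) ∈ Metric.ball (0:ℝ) δ := by
    rw [Metric.mem_ball, dist_zero_right, Real.norm_eq_abs, abs_of_pos (half_pos hδpos)]
    linarith
  have hφmem : φ (δ/2) ∈ regionRsub n f' := interior_subset (hδ hball)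
  have hle : (φ (δ/2)).1 i ≤ 0 := hφmem.2 i hi'
  have : (φ (δ/2)).1 i = δ/2 := by
    simp [φ, hc, hti0, Pi.single_apply, hij]
  rw [this] at hle
  linarith

/-- For distinct nonempty f ≠ f', the relative interiors of R_f and R_{f'}
in E are disjoint. -/
theorem stmt6 (n : ℕ) (f f' : Finset (Fin (n+1)))
    (hf : f.Nonempty) (hf' : f'.Nonempty) (hne : f ≠ f') :
    interior (regionRsub n f) ∩ interior (regionRsub n f') = ∅ := by
  rw [Set.eq_empty_iff_forall_notMem]
  rintro t ⟨ht, ht'⟩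
  rcases Finset.not_subset.1 (fun h => hne (le_antisymm h (fun j hj => by
      by_contra hjf
      exact aux6 n f' f j hj hjf hf t ht' ht))) with ⟨i, hif, hif'⟩
  · exact aux6 n f f' i hif hif' hf' t ht ht'
end
end

section
/- For every nonempty subset f ⊆ {0,…,n}, the preimage of the face |f| under the retraction q equals R_{≤f}: q^{-1}(|f|) = R_{≤f}. -/
open Finset

noncomputable section

/-- q⁻¹(|f|) = R_{≤f}. -/
theorem stmt9 (n : ℕ) (f : Finset (Fin (n+1))) (hf : f.Nonempty) :
    {t : Fin (n+1) → ℝ | t ∈ planeE n ∧ retr n t ∈ faceF n f} = regionRle n f := by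
  ext t
  simp only [Set.mem_setOf_eq, planeE, regionRle, faceF, retr]
  constructor
  · rintro ⟨ht, ⟨-, -⟩, hzero⟩
    refine ⟨ht, fun i hi => ?_⟩
    have hS : (1:ℝ) ≤ ∑ j, max (t j) 0 := by
      rw [← ht]; exact Finset.sum_le_sum fun j _ => le_max_left _ _
    have hSpos : (0:ℝ) < ∑ j, max (t j) 0 := lt_of_lt_of_le one_pos hS
    have := hzero i hi
    have hmax : max (t i) 0 = 0 := by
      rcases mul_eq_zero.mp this with h | h
      · exact absurd h (by positivity)
      · exact h
    have := le_max_left (t i) 0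
    linarith [hmax ▸ this]
  · rintro ⟨ht, hle⟩
    have hS : (1:ℝ) ≤ ∑ j, max (t j) 0 := by
      rw [← ht]; exact Finset.sum_le_sum fun j _ => le_max_left _ _
    have hSpos : (0:ℝ) < ∑ j, max (t j) 0 := lt_of_lt_of_le one_pos hS
    refine ⟨ht, ⟨?_, fun i => by positivity⟩, fun i hi => ?_⟩
    · rw [← Finset.mul_sum, inv_mul_cancel₀ (ne_of_gt hSpos)]
    · have : max (t i) 0 = 0 := max_eq_right (hle i hi)
      rw [this, mul_zero]
end
end

section
/- Let f ⊆ {0,…,n} be nonempty and let t ∈ E satisfy q(t) ∈ |f| and q(t)_i ≥ L for all i ∈ f (that is, q(t) ∈ |f| ∩ CR_f). Then t_i > 0 for all i ∈ f and t_i ≤ 0 for all i ∉ f; moreover ∑_j max(t_j,0) = 1 − ∑_{j∉f} t_j, and q(t)_i = (1 − ∑_{j∉f} t_j)^{-1}·t_i for i ∈ f while q(t)_i = 0 for i ∉ f. -/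
open Finset

noncomputable section

/-- If q(t) ∈ |f| ∩ CR_f then tᵢ > 0 on f, tᵢ ≤ 0 off f, and q(t) has the
explicit form described in the paper. -/
theorem stmt14 (n : ℕ) (L : ℝ) (hL0 : 0 < L) (hL1 : L < 1 / ((n : ℝ) + 1))
    (f : Finset (Fin (n+1))) (hf : f.Nonempty)
    (t : Fin (n+1) → ℝ) (ht : t ∈ planeE n)
    (hq : retr n t ∈ faceF n f) (hqL : ∀ i ∈ f, L ≤ retr n t i) :
    (∀ i ∈ f, 0 < t i) ∧ (∀ i ∉ f, t i ≤ 0) ∧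
    (∑ j, max (t j) 0 = 1 - ∑ j ∈ fᶜ, t j) ∧
    (∀ i ∈ f, retr n t i = (1 - ∑ j ∈ fᶜ, t j)⁻¹ * t i) ∧
    (∀ i ∉ f, retr n t i = 0) := by
  obtain ⟨⟨hsum1, hpos⟩, hzero⟩ := hq
  have hE : ∑ i, t i = 1 := ht
  set S := ∑ j, max (t j) 0 with hSdef
  have hS0 : 0 ≤ S := Finset.sum_nonneg fun j _ => le_max_right _ _
  have hSne : S ≠ 0 := by
    intro h
    have : ∑ i, retr n t i = 0 := by
      simp [retr, ← hSdef, h]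
    rw [hsum1] at this
    norm_num at this
  have hSpos : 0 < S := lt_of_le_of_ne hS0 (Ne.symm hSne)
  have hfpos : ∀ i ∈ f, 0 < t i := by
    intro i hi
    by_contra h
    push_neg at h
    have hmax : max (t i) 0 = 0 := max_eq_right h
    have := hqL i hi
    rw [retr] at this
    rw [hmax, mul_zero] at this
    linarith
  have hfneg : ∀ i ∉ f, t i ≤ 0 := by
    intro i hi
    have h0 := hzero i hi
    rw [retr] at h0
    have : max (t i) 0 = 0 := by
      rcases mul_eq_zero.mp h0 with h | h
      · exact absurd h (inv_ne_zero hSne)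
      · exact h
    calc t i ≤ max (t i) 0 := le_max_left _ _
    _ = 0 := this
  have hSf : S = ∑ j ∈ f, t j := by
    rw [hSdef, ← Finset.sum_add_sum_compl f]
    have h1 : ∑ j ∈ f, max (t j) 0 = ∑ j ∈ f, t j :=
      Finset.sum_congr rfl fun j hj => max_eq_left (hfpos j hj).le
    have h2 : ∑ j ∈ fᶜ, max (t j) 0 = 0 :=
      Finset.sum_eq_zero fun j hj => max_eq_right (hfneg j (Finset.mem_compl.mp hj))
    rw [h1, h2, add_zero]
  have hsplit : ∑ j ∈ f, t j + ∑ j ∈ fᶜ, t j = 1 := by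
    rw [Finset.sum_add_sum_compl]; exact hE
  have hSval : S = 1 - ∑ j ∈ fᶜ, t j := by rw [hSf]; linarith
  refine ⟨hfpos, hfneg, hSval, ?_, hzero⟩
  intro i hi
  rw [retr, ← hSdef, hSval, max_eq_left (hfpos i hi).le]
end
end

section
/- Every point of the standard simplex lies in a simplex of the barycentric subdivision: for every x ∈ Σ there exist m ≥ 1 and a strictly increasing chain of nonempty subsets g_1 ⊊ g_2 ⊊ ⋯ ⊊ g_m of {0,…,n} such that x belongs to the convex hull of the barycentres {ξ_{g_1}, …, ξ_{g_m}}. -/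
open Finset

noncomputable section

/-!
Order the coordinates decreasingly, `x (σ 0) ≥ ⋯ ≥ x (σ n) ≥ 0`, and put `g j = σ {0, …, j}` and
`x (σ (n+1)) := 0`. Summation by parts gives `x = ∑ j, (x (σ j) - x (σ (j+1))) • 𝟙_{g j}`, and since
`ξ_{g j} = (j+1)⁻¹ • 𝟙_{g j}` this is a combination of the `ξ_{g j}` with nonnegative weights
`(j+1) (x (σ j) - x (σ (j+1)))`. Summing coordinates shows the weights add up to `1`.
-/

def zeroExtend {N : ℕ} (y : Fin N → ℝ) (k : ℕ) : ℝ := if h : k < N then y ⟨k, h⟩ else 0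

section ZeroExtend

variable {N : ℕ}

lemma zeroExtend_val (y : Fin N → ℝ) (k : Fin N) : zeroExtend y k = y k := dif_pos k.isLt

lemma zeroExtend_of_le (y : Fin N → ℝ) {k : ℕ} (hk : N ≤ k) : zeroExtend y k = 0 :=
  dif_neg hk.not_gt

lemma zeroExtend_succ_le {y : Fin N → ℝ} (hy : Antitone y) (hy0 : ∀ i, 0 ≤ y i) (k : Fin N) :
    zeroExtend y (k + 1) ≤ y k := by
  by_cases h : (k : ℕ) + 1 < N
  · rw [zeroExtend, dif_pos h]
    exact hy (Fin.le_def.mpr k.val.le_succ)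
  · rw [zeroExtend_of_le y (not_lt.mp h)]
    exact hy0 k

lemma sum_Ici_sub_zeroExtend (y : Fin N → ℝ) (k : Fin N) :
    ∑ j ∈ Ici k, (zeroExtend y j - zeroExtend y (j + 1)) = y k :=
  calc ∑ j ∈ Ici k, (zeroExtend y j - zeroExtend y (j + 1))
      = ∑ i ∈ Ico (k : ℕ) N, (zeroExtend y i - zeroExtend y (i + 1)) := by
        rw [← Fin.map_valEmbedding_Ici, sum_map]; rfl
    _ = -∑ i ∈ Ico (k : ℕ) N, (zeroExtend y (i + 1) - zeroExtend y i) := by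
        rw [← sum_neg_distrib]; simp only [neg_sub]
    _ = y k := by
        rw [sum_Ico_sub _ k.isLt.le, zeroExtend_of_le y le_rfl, zeroExtend_val, zero_sub, neg_neg]

end ZeroExtend

lemma exists_perm_antitone_comp {α : Type*} [LinearOrder α] {N : ℕ} (x : Fin N → α) :
    ∃ σ : Equiv.Perm (Fin N), Antitone (x ∘ σ) :=
  ⟨Tuple.sort (OrderDual.toDual ∘ x), Tuple.monotone_sort (OrderDual.toDual ∘ x)⟩

lemma strictMono_map_Iic {α β : Type*} [Preorder α] [LocallyFiniteOrderBot α] (f : α ↪ β) :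
    StrictMono fun a => (Iic a).map f :=
  fun _ _ h => map_ssubset_map.mpr (Iic_ssubset_Iic.mpr h)

section Barycentre

variable {n : ℕ}

lemma bary_apply_of_mem {f : Finset (Fin (n+1))} {i : Fin (n+1)} (hi : i ∈ f) :
    bary n f i = (#f : ℝ)⁻¹ := if_pos hi

lemma bary_apply_of_notMem {f : Finset (Fin (n+1))} {i : Fin (n+1)} (hi : i ∉ f) :
    bary n f i = 0 := if_neg hi

lemma sum_bary {f : Finset (Fin (n+1))} (hf : f.Nonempty) : ∑ i, bary n f i = 1 := by
  simp only [bary, sum_ite_mem, univ_inter, sum_const, nsmul_eq_mul]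
  exact mul_inv_cancel₀ (by exact_mod_cast hf.card_pos.ne')

lemma bary_map_apply (σ : Equiv.Perm (Fin (n+1))) (f : Finset (Fin (n+1))) (i : Fin (n+1)) :
    bary n (f.map σ.toEmbedding) (σ i) = bary n f i := by
  simp [bary]

lemma mem_convexHull_bary_of_sum_smul_eq {ι : Type*} [Fintype ι] {x : Fin (n+1) → ℝ}
    (hx : ∑ i, x i = 1) {w : ι → ℝ} (hw : ∀ j, 0 ≤ w j) {g : ι → Finset (Fin (n+1))}
    (hg : ∀ j, (g j).Nonempty) (hxw : ∑ j, w j • bary n (g j) = x) :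
    x ∈ convexHull ℝ (Set.range fun j => bary n (g j)) := by
  have hw1 : ∑ j, w j = 1 := by
    rw [← hx, ← hxw]
    simp only [Finset.sum_apply, Pi.smul_apply, smul_eq_mul]
    rw [sum_comm]
    simp only [← mul_sum, sum_bary (hg _), mul_one]
  rw [← hxw]
  exact (convex_convexHull ℝ _).sum_mem (fun j _ => hw j) hw1
    (fun j _ => subset_convexHull ℝ _ ⟨j, rfl⟩)

def chainWeight (y : Fin (n+1) → ℝ) (j : Fin (n+1)) : ℝ :=
  ((j : ℝ) + 1) * (zeroExtend y j - zeroExtend y (j + 1))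

lemma chainWeight_nonneg {y : Fin (n+1) → ℝ} (hy : Antitone y) (hy0 : ∀ i, 0 ≤ y i)
    (j : Fin (n+1)) : 0 ≤ chainWeight y j := by
  rw [chainWeight, zeroExtend_val]
  exact mul_nonneg (by positivity) (sub_nonneg.mpr (zeroExtend_succ_le hy hy0 j))

lemma chainWeight_mul_bary_Iic (y : Fin (n+1) → ℝ) (j k : Fin (n+1)) :
    chainWeight y j * bary n (Iic j) k =
      if k ≤ j then zeroExtend y j - zeroExtend y (j + 1) else 0 := by
  by_cases hkj : k ≤ j
  · rw [bary_apply_of_mem (mem_Iic.mpr hkj), Fin.card_Iic, if_pos hkj, chainWeight]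
    push_cast
    field_simp
  · rw [bary_apply_of_notMem (by simpa using hkj), if_neg hkj, mul_zero]

lemma sum_chainWeight_smul_bary_Iic (y : Fin (n+1) → ℝ) :
    ∑ j, chainWeight y j • bary n (Iic j) = y := by
  funext k
  simp only [Finset.sum_apply, Pi.smul_apply, smul_eq_mul, chainWeight_mul_bary_Iic]
  rw [← sum_filter, filter_le_eq_Ici, sum_Ici_sub_zeroExtend]

lemma sum_chainWeight_smul_bary_map_Iic (σ : Equiv.Perm (Fin (n+1))) (x : Fin (n+1) → ℝ) :
    ∑ j, chainWeight (x ∘ σ) j • bary n ((Iic j).map σ.toEmbedding) = x := by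
  funext i
  obtain ⟨k, rfl⟩ := σ.surjective i
  simpa only [Finset.sum_apply, Pi.smul_apply, bary_map_apply, Function.comp_apply] using
    congrFun (sum_chainWeight_smul_bary_Iic (x ∘ σ)) k

end Barycentre

/-- Every point of Σ lies in the convex hull of the barycentres of a strictly
increasing chain of nonempty subsets of {0,…,n}. -/
theorem stmt17 (n : ℕ) (x : Fin (n+1) → ℝ) (hx : x ∈ simplexS n) :
    ∃ m : ℕ, 1 ≤ m ∧ ∃ g : Fin m → Finset (Fin (n+1)),
      (∀ j, (g j).Nonempty) ∧ StrictMono g ∧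
      x ∈ convexHull ℝ (Set.range fun j => bary n (g j)) := by
  obtain ⟨hsum, hpos⟩ := hx
  obtain ⟨σ, hσ⟩ := exists_perm_antitone_comp x
  have hne : ∀ j, ((Iic j).map σ.toEmbedding).Nonempty := fun j => ⟨σ j, by simp⟩
  refine ⟨n + 1, n.succ_pos, _, hne, strictMono_map_Iic σ.toEmbedding, ?_⟩
  exact mem_convexHull_bary_of_sum_smul_eq hsum (chainWeight_nonneg hσ fun i => hpos (σ i)) hne
    (sum_chainWeight_smul_bary_map_Iic σ x)
end
end

section
/- Explicit barycentric decomposition: let x ∈ Σ and let π be a permutation of {0,…,n} sorting the coordinates decreasingly, x_{π(0)} ≥ x_{π(1)} ≥ ⋯ ≥ x_{π(n)}; set x_{π(n+1)} := 0, c_j := (j+1)·(x_{π(j)} − x_{π(j+1)}) for 0 ≤ j ≤ n, and g_j := {π(0),…,π(j)}. Then all c_j ≥ 0, ∑_{j=0}^{n} c_j = 1, and x = ∑_{j=0}^{n} c_j · ξ_{g_j}. -/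
open Finset

noncomputable section

private lemma tele_aux (f : ℕ → ℝ) (k m : ℕ) (h : k ≤ m) :
    ∑ j ∈ Finset.Ico k m, (f j - f (j+1)) = f k - f m := by
  induction m with
  | zero => interval_cases k; simp
  | succ m ih =>
    rcases Nat.lt_or_ge k (m+1) with hk | hk
    · have hk' : k ≤ m := Nat.lt_succ_iff.mp hk
      rw [Finset.sum_Ico_succ_top hk', ih hk']; ring
    · have : k = m + 1 := le_antisymm h hk
      subst this; simp

/-- Explicit barycentric decomposition of a point of Σ with decreasingly
sorted coordinates. -/
theorem stmt18 (n : ℕ) (x : Fin (n+1) → ℝ) (hx : x ∈ simplexS n)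
    (π : Equiv.Perm (Fin (n+1)))
    (hsort : ∀ j k : Fin (n+1), j ≤ k → x (π k) ≤ x (π j))
    (y : ℕ → ℝ) (hy : ∀ k : ℕ, y k = if h : k < n+1 then x (π ⟨k, h⟩) else 0)
    (c : Fin (n+1) → ℝ)
    (hc : ∀ j : Fin (n+1), c j = ((j : ℕ) + 1 : ℝ) * (y (j : ℕ) - y ((j : ℕ) + 1)))
    (g : Fin (n+1) → Finset (Fin (n+1)))
    (hg : ∀ j : Fin (n+1), g j = (Finset.Iic j).image π) :
    (∀ j, 0 ≤ c j) ∧ (∑ j, c j = 1) ∧ (∀ i, x i = ∑ j, c j * bary n (g j) i) := by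
  obtain ⟨hsum, hnn⟩ := hx
  -- y is antitone
  have hmono : ∀ a b : ℕ, a ≤ b → y b ≤ y a := by
    intro a b hab
    rw [hy a, hy b]
    by_cases hb : b < n+1
    · have ha : a < n+1 := lt_of_le_of_lt hab hb
      rw [dif_pos hb, dif_pos ha]
      exact hsort ⟨a, ha⟩ ⟨b, hb⟩ hab
    · rw [dif_neg hb]
      by_cases ha : a < n+1
      · rw [dif_pos ha]; exact hnn _
      · rw [dif_neg ha]
  have hytop : y (n+1) = 0 := by rw [hy]; simp
  -- nonnegativity of y
  have hynn : ∀ a : ℕ, 0 ≤ y a := by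
    intro a
    rw [hy]
    by_cases ha : a < n+1
    · rw [dif_pos ha]; exact hnn _
    · rw [dif_neg ha]
  -- part 1
  have part1 : ∀ j, 0 ≤ c j := by
    intro j
    rw [hc]
    apply mul_nonneg (by positivity)
    have := hmono j (j+1) (Nat.le_succ _)
    linarith
  refine ⟨part1, ?_, ?_⟩
  · -- ∑ c j = 1 via Abel
    have h1 : ∑ j : Fin (n+1), c j
        = ∑ j ∈ Finset.range (n+1), ((j:ℝ)+1) * (y j - y (j+1)) := by
      rw [Finset.sum_range fun j => ((j:ℝ)+1) * (y j - y (j+1))]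
      exact Finset.sum_congr rfl fun j _ => hc j
    rw [h1]
    have h2 : ∀ j : ℕ, ((j:ℝ)+1) * (y j - y (j+1))
        = y j + ((j:ℝ) * y j - ((j:ℝ)+1) * y (j+1)) := by intro j; ring
    have h3 : ∑ j ∈ Finset.range (n+1), ((j:ℝ)+1) * (y j - y (j+1))
        = (∑ j ∈ Finset.range (n+1), y j)
          + ∑ j ∈ Finset.range (n+1), (((j:ℝ)) * y j - (((j:ℝ)+1)) * y (j+1)) := by
      rw [← Finset.sum_add_distrib]
      exact Finset.sum_congr rfl fun j _ => h2 j
    rw [h3]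
    have h4 : ∑ j ∈ Finset.range (n+1), (((j:ℝ)) * y j - (((j:ℝ)+1)) * y (j+1))
        = (0:ℝ) * y 0 - ((n+1:ℕ):ℝ) * y (n+1) := by
      have := Finset.sum_range_sub' (fun j : ℕ => (j:ℝ) * y j) (n+1)
      simpa using this
    rw [h4, hytop]
    have h5 : ∑ j ∈ Finset.range (n+1), y j = ∑ i : Fin (n+1), x i := by
      rw [← Equiv.sum_comp π x, Finset.sum_range fun j => y j]
      apply Finset.sum_congr rfl
      intro j _
      rw [hy, dif_pos j.isLt]
    rw [h5, hsum]; ring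
  · -- decomposition
    intro i
    set k : Fin (n+1) := π.symm i with hk
    have hxk : x i = y k := by
      rw [hy, dif_pos k.isLt]
      simp only [hk, Fin.eta, Equiv.apply_symm_apply]
    have hcard : ∀ j : Fin (n+1), (g j).card = (j:ℕ) + 1 := by
      intro j
      rw [hg, Finset.card_image_of_injective _ π.injective, Fin.card_Iic]
    have hmem : ∀ j : Fin (n+1), i ∈ g j ↔ k ≤ j := by
      intro j
      rw [hg, Finset.mem_image]
      constructor
      · rintro ⟨a, ha, rfl⟩
        rw [Finset.mem_Iic] at ha
        simpa [hk] using ha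
      · intro h
        exact ⟨k, Finset.mem_Iic.mpr h, by simp [hk]⟩
    have hterm : ∀ j : Fin (n+1), c j * bary n (g j) i
        = if (k:ℕ) ≤ (j:ℕ) then y (j:ℕ) - y ((j:ℕ)+1) else 0 := by
      intro j
      unfold bary
      by_cases h : i ∈ g j
      · rw [if_pos h, if_pos ((Fin.le_def).mp ((hmem j).mp h)), hcard, hc]
        push_cast
        field_simp
      · rw [if_neg h, if_neg (fun hle => h ((hmem j).mpr (Fin.le_def.mpr hle))), mul_zero]
    calc x i = y k := hxk
    _ = ∑ j ∈ Finset.Ico (k:ℕ) (n+1), (y j - y (j+1)) := by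
        rw [tele_aux y k (n+1) (le_of_lt k.isLt), hytop]; ring
    _ = ∑ j ∈ Finset.range (n+1), if (k:ℕ) ≤ j then y j - y (j+1) else 0 := by
        rw [← Finset.sum_filter]
        congr 1
        ext j
        simp [Finset.mem_Ico, and_comm]
    _ = ∑ j : Fin (n+1), c j * bary n (g j) i := by
        rw [Finset.sum_range fun j => if (k:ℕ) ≤ j then y j - y (j+1) else 0]
        exact (Finset.sum_congr rfl fun j _ => (hterm j)).symm
end
end
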